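/- arXiv:2503.22779 — 4 statements merged into one kernel-verified Lean document; each statement's English description precedes it below -/
import Mathlib

section
/- Let S be a finite set and A = A₁ × ⋯ × A_N a finite product of finite sets. Fix s ∈ S, a function Q : A → ℝ, and for each agent i a probability mass function μ_i on A_i. For an ordered subset (i₁,…,i_h) of agents, define Q_{i_{1:h}}(a_{i_1},…,a_{i_h}) as the expectation of Q over the actions of all remaining agents drawn independently from their μ_j, and define the multi-agent advantage A_{i_h}(a_{i_{1:h−1}}, a_{i_h}) = Q_{i_{1:h}}(a_{i_{1:h−1}}, a_{i_h}) − Q_{i_{1:h−1}}(a_{i_{1:h−1}}) (with Q_{i_{1:0}} equal to the full expectation of Q). Then for any permutation (i₁,…,i_N) of the agents and any joint action a, ∑_{h=1}^N A_{i_h}(a_{i_{1:h−1}}, a_{i_h}) = Q(a) − E_{a'∼∏μ_i}[Q(a')]. -/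
/-- Partial expectation of `Q` where the coordinates in `T` are fixed to the
values given by `a`, and all remaining coordinates are sampled independently
from the per-agent distributions `μ i`. -/
noncomputable def Qpart {N : ℕ} {A : Fin N → Type} [∀ i, Fintype (A i)]
    [∀ i, DecidableEq (A i)]
    (μ : ∀ i, A i → ℝ) (Q : (∀ i, A i) → ℝ) (T : Finset (Fin N))
    (a : ∀ i, A i) : ℝ :=
  ∑ b : (∀ i, A i),
    (∏ i, if i ∈ T then (if b i = a i then (1 : ℝ) else 0) else μ i (b i)) * Q b

theorem stmt_6 {N : ℕ} {A : Fin N → Type} [∀ i, Fintype (A i)]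
    [∀ i, DecidableEq (A i)]
    (μ : ∀ i, A i → ℝ) (Q : (∀ i, A i) → ℝ)
    (hμnn : ∀ i a, 0 ≤ μ i a) (hμ1 : ∀ i, ∑ a, μ i a = 1)
    (e : Equiv.Perm (Fin N)) (a : ∀ i, A i) :
    ∑ h : Fin N,
        (Qpart μ Q ((Finset.univ.filter (fun j : Fin N => (j : ℕ) < (h : ℕ) + 1)).image e) a
          - Qpart μ Q ((Finset.univ.filter (fun j : Fin N => (j : ℕ) < (h : ℕ))).image e) a)
      = Q a - ∑ b : (∀ i, A i), (∏ i, μ i (b i)) * Q b := by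
  set g : ℕ → ℝ := fun k =>
    Qpart μ Q ((Finset.univ.filter (fun j : Fin N => (j : ℕ) < k)).image e) a with hg
  have hsum : ∑ h : Fin N, (g ((h : ℕ) + 1) - g (h : ℕ)) = g N - g 0 := by
    rw [Fin.sum_univ_eq_sum_range (fun k => g (k + 1) - g k), Finset.sum_range_sub]
  have h0 : g 0 = ∑ b : (∀ i, A i), (∏ i, μ i (b i)) * Q b := by
    simp [hg, Qpart]
  have hN : g N = Q a := by
    have huniv : (Finset.univ.filter (fun j : Fin N => (j : ℕ) < N)).image e =
        Finset.univ := by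
      rw [Finset.filter_true_of_mem (fun j _ => j.isLt)]
      exact Finset.image_univ_equiv e
    simp only [hg, Qpart, huniv]
    rw [Finset.sum_eq_single a]
    · simp
    · intro b _ hb
      have : (∏ i, if i ∈ (Finset.univ : Finset (Fin N)) then
          (if b i = a i then (1:ℝ) else 0) else μ i (b i)) = 0 := by
        simp only [Finset.mem_univ, if_true]
        obtain ⟨i, hi⟩ := Function.ne_iff.mp hb
        exact Finset.prod_eq_zero (Finset.mem_univ i) (by simp [hi])
      rw [this, zero_mul]
    · simp
  calc ∑ h : Fin N,
        (Qpart μ Q ((Finset.univ.filter (fun j : Fin N => (j : ℕ) < (h : ℕ) + 1)).image e) a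
          - Qpart μ Q ((Finset.univ.filter (fun j : Fin N => (j : ℕ) < (h : ℕ))).image e) a)
      = ∑ h : Fin N, (g ((h : ℕ) + 1) - g (h : ℕ)) := rfl
    _ = g N - g 0 := hsum
    _ = Q a - ∑ b : (∀ i, A i), (∏ i, μ i (b i)) * Q b := by rw [h0, hN]
end

section
/- Let A = A₁ × ⋯ × A_N be a finite product of finite sets, and fix s. Let μ = (μ₁,…,μ_N) be a joint product policy with μ_i(a_i) > 0 for all i, a_i. Let A_f : A → ℝ satisfy E_{a∼μ}[A_f(a)] = 0 conditional on any fixed actions of the first h−1 agents in the sense of the multi-agent advantage construction. For an ordered subset (i₁,…,i_h), a product distribution μ'_{i_{1:h−1}} over A_{i_1}×⋯×A_{i_{h−1}}, and a distribution 𝜇̂_{i_h} over A_{i_h}, the following importance-sampling identity holds: E_{a∼μ}[ (𝜇̂_{i_h}(a_{i_h})/μ_{i_h}(a_{i_h}) − 1) · (μ'_{i_{1:h−1}}(a_{i_{1:h−1}})/μ_{i_{1:h−1}}(a_{i_{1:h−1}})) · A_f(a) ] = E_{a_{i_{1:h−1}}∼μ'_{i_{1:h−1}}, a_{i_h}∼𝜇̂_{i_h}}[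 A_{f,i_h}(a_{i_{1:h−1}}, a_{i_h}) ], where A_{f,i_h}(a_{i_{1:h−1}}, a_{i_h}) = E_{a_{−i_{1:h}}∼μ_{−i_{1:h}}}[A_f(a_{i_{1:h}}, a_{−i_{1:h}})] − E_{a_{−i_{1:h−1}}∼μ_{−i_{1:h−1}}}[A_f(a_{i_{1:h−1}}, a_{−i_{1:h−1}})]. -/
/-!
Write the behaviour policy as `μ(a) = μ_{i_{1:h-1}}(a_{i_{1:h-1}}) μ_{i_h}(a_{i_h}) ρ(a)`, where `ρ` is
the product over the agents outside `i_{1:h}`. Once the importance ratios cancel, the left side is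
`∑ₐ μ'(a_{i_{1:h-1}}) (μ̂(a_{i_h}) - μ_{i_h}(a_{i_h})) ρ(a) A_f(a)`. Each of the two terms on the
right becomes one of these two sums through the involution `(y, a) ↦ (a|_block, a overridden by y)`,
applied once to the block `i_{1:h}` and once to the block `i_{1:h-1}`.
-/

open Finset

theorem sum_mul_sum_upd_eq_sum {X Y : Type*} [Fintype X] [Fintype Y]
    (p : X → Y) (upd : X → Y → X)
    (p_upd : ∀ a y, p (upd a y) = y) (upd_upd_p : ∀ a y, upd (upd a y) (p a) = a)
    (w : Y → ℝ) (hw : ∑ y, w y = 1) (ρ : X → ℝ) (ρ_upd : ∀ a y, ρ (upd a y) = ρ a)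
    (ν : Y → ℝ) (F : X → ℝ) :
    ∑ y, ν y * ∑ a, w (p a) * ρ a * F (upd a y) = ∑ a, ν (p a) * ρ a * F a := by
  have hT : Function.Involutive fun x : Y × X => (p x.2, upd x.2 x.1) := fun x => by
    simp [p_upd, upd_upd_p]
  calc ∑ y, ν y * ∑ a, w (p a) * ρ a * F (upd a y)
      = ∑ x : Y × X, ν x.1 * (w (p x.2) * ρ x.2 * F (upd x.2 x.1)) := by
        simp only [Fintype.sum_prod_type, mul_sum]
    _ = ∑ x : Y × X, w x.1 * (ν (p x.2) * ρ x.2 * F x.2) :=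
        (Fintype.sum_bijective _ hT.bijective _ _ fun x => by
          simp only [p_upd, upd_upd_p, ρ_upd]; ring).symm
    _ = ∑ a, ν (p a) * ρ a * F a := by
        rw [Fintype.sum_prod_type, sum_comm]
        simp only [← sum_mul, hw, one_mul]

theorem prod_univ_eq_prod_comp_mul_prod_compl {ι κ M : Type*} [Fintype ι] [Fintype κ]
    [DecidableEq ι] [CommMonoid M] {e : κ → ι} (he : Function.Injective e) (f : ι → M) :
    ∏ i, f i = (∏ k, f (e k)) * ∏ i ∈ (univ.image e)ᶜ, f i := by
  rw [← prod_mul_prod_compl (univ.image e), prod_image fun x _ y _ hxy => he hxy]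

theorem stmt_7_general {N : ℕ} {A : Fin N → Type} [∀ i, Fintype (A i)]
    {h : ℕ}
    -- the ordered subset of agents i₁, …, i_h, i_{h+1}=i_h (last is the updating agent)
    (ι : Fin (h + 1) → Fin N) (hι : Function.Injective ι)
    -- behavior joint policy μ, a fully supported product distribution
    (μ : ∀ i, A i → ℝ)
    (hμpos : ∀ i a, 0 < μ i a) (hμ1 : ∀ i, ∑ a, μ i a = 1)
    -- other product policy μ' of the first h agents
    (μ' : ∀ j : Fin h, A (ι (Fin.castSucc j)) → ℝ)
    -- other policy μ̂ of the last agent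
    (μhat : A (ι (Fin.last h)) → ℝ)
    (hμhat1 : ∑ a, μhat a = 1)
    -- the advantage function, with zero mean under μ
    (Af : (∀ i, A i) → ℝ)
    -- `ovr a c b` overrides the joint action `a` by the actions `c` of the
    -- first h agents and the action `b` of the last agent
    (ovr : (∀ i, A i) → (∀ j : Fin h, A (ι (Fin.castSucc j))) →
      A (ι (Fin.last h)) → ∀ i, A i)
    (hovr1 : ∀ a c b (j : Fin h), ovr a c b (ι (Fin.castSucc j)) = c j)
    (hovr2 : ∀ a c b, ovr a c b (ι (Fin.last h)) = b)
    (hovr3 : ∀ a c b i, (∀ j : Fin (h + 1), ι j ≠ i) → ovr a c b i = a i) :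
    -- importance-sampling identity
    ∑ a : (∀ i, A i), (∏ i, μ i (a i)) *
        ((μhat (a (ι (Fin.last h))) / μ (ι (Fin.last h)) (a (ι (Fin.last h))) - 1) *
          (∏ j : Fin h,
            μ' j (a (ι (Fin.castSucc j))) / μ (ι (Fin.castSucc j)) (a (ι (Fin.castSucc j)))) *
          Af a)
      =
      ∑ c : (∀ j : Fin h, A (ι (Fin.castSucc j))), ∑ b : A (ι (Fin.last h)),
        (∏ j, μ' j (c j)) * μhat b *
          -- the multi-agent advantage A_{f,i_h}(c, b):
          ((∑ a : (∀ i, A i), (∏ i, μ i (a i)) * Af (ovr a c b))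
            - ∑ a : (∀ i, A i), (∏ i, μ i (a i)) * Af (ovr a c (a (ι (Fin.last h))))) := by
  have hovr_ovr : ∀ a c b,
      ovr (ovr a c b) (fun j => a (ι j.castSucc)) (a (ι (Fin.last h))) = a := by
    intro a c b
    funext i
    by_cases hi : i ∈ Set.range ι
    · obtain ⟨j, rfl⟩ := hi
      induction j using Fin.lastCases with
      | last => exact hovr2 _ _ _
      | cast j => exact hovr1 _ _ _ j
    · have hi' : ∀ j, ι j ≠ i := fun j hj => hi ⟨j, hj⟩
      rw [hovr3 _ _ _ _ hi', hovr3 _ _ _ _ hi']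
  set ρ : (∀ i, A i) → ℝ := fun a => ∏ i ∈ (univ.image ι)ᶜ, μ i (a i)
  have hρ_ovr : ∀ a c b, ρ (ovr a c b) = ρ a := fun a c b =>
    prod_congr rfl fun i hi => congrArg (μ i) (hovr3 a c b i (by simpa using hi))
  have hμ_split : ∀ a : ∀ i, A i, ∏ i, μ i (a i) =
      (∏ j : Fin h, μ _ (a (ι j.castSucc))) * μ _ (a (ι (Fin.last h))) * ρ a := fun a => by
    rw [prod_univ_eq_prod_comp_mul_prod_compl hι, Fin.prod_univ_castSucc]
  have hmass : ∑ c : ∀ j : Fin h, A (ι j.castSucc), ∏ j, μ _ (c j) = 1 := by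
    simp [← Fintype.prod_sum, hμ1]
  have hblock := sum_mul_sum_upd_eq_sum
    (fun a : ∀ i, A i => ((fun j : Fin h => a (ι j.castSucc)), a (ι (Fin.last h))))
    (fun a y => ovr a y.1 y.2) (fun a y => Prod.ext (funext (hovr1 a y.1 y.2)) (hovr2 a y.1 y.2))
    (fun a y => hovr_ovr a y.1 y.2) (fun y => (∏ j, μ _ (y.1 j)) * μ _ y.2)
    (by simp [Fintype.sum_prod_type, ← mul_sum, hmass, hμ1])
    ρ (fun a y => hρ_ovr a y.1 y.2) (fun y => (∏ j, μ' j (y.1 j)) * μhat y.2) Af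
  have hprefix := sum_mul_sum_upd_eq_sum (fun (a : ∀ i, A i) (j : Fin h) => a (ι j.castSucc))
    (fun a c => ovr a c (a (ι (Fin.last h)))) (fun a c => funext (hovr1 a c _))
    (fun a c => by simp only [hovr2, hovr_ovr]) (fun c => ∏ j, μ _ (c j)) hmass
    (fun a => μ _ (a (ι (Fin.last h))) * ρ a) (fun a c => by simp only [hovr2, hρ_ovr])
    (fun c => ∏ j, μ' j (c j)) Af
  simp only [Fintype.sum_prod_type] at hblock hprefix
  calc _ = ∑ a : ∀ i, A i, (∏ j, μ' j (a (ι j.castSucc))) * μhat (a (ι (Fin.last h))) * ρ a * Af a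
        - ∑ a : ∀ i, A i,
            (∏ j, μ' j (a (ι j.castSucc))) * (μ _ (a (ι (Fin.last h))) * ρ a) * Af a := by
        rw [← sum_sub_distrib]
        refine sum_congr rfl fun a _ => ?_
        have hP : ∏ j : Fin h, μ _ (a (ι j.castSucc)) ≠ 0 :=
          prod_ne_zero_iff.2 fun j _ => (hμpos _ _).ne'
        have hL := (hμpos _ (a (ι (Fin.last h)))).ne'
        rw [hμ_split, prod_div_distrib]
        field_simp
    _ = _ := by
        rw [← hblock, ← hprefix, ← sum_sub_distrib]
        refine sum_congr rfl fun c _ => ?_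
        simp only [hμ_split, mul_sub, sum_sub_distrib, mul_assoc, ← mul_sum, ← sum_mul, hμhat1,
          one_mul]

theorem stmt_7 {N : ℕ} {A : Fin N → Type} [∀ i, Fintype (A i)]
    [∀ i, DecidableEq (A i)]
    {h : ℕ}
    -- the ordered subset of agents i₁, …, i_h, i_{h+1}=i_h (last is the updating agent)
    (ι : Fin (h + 1) → Fin N) (hι : Function.Injective ι)
    -- behavior joint policy μ, a fully supported product distribution
    (μ : ∀ i, A i → ℝ)
    (hμpos : ∀ i a, 0 < μ i a) (hμ1 : ∀ i, ∑ a, μ i a = 1)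
    -- other product policy μ' of the first h agents
    (μ' : ∀ j : Fin h, A (ι (Fin.castSucc j)) → ℝ)
    (hμ'nn : ∀ j a, 0 ≤ μ' j a) (hμ'1 : ∀ j, ∑ a, μ' j a = 1)
    -- other policy μ̂ of the last agent
    (μhat : A (ι (Fin.last h)) → ℝ)
    (hμhatnn : ∀ a, 0 ≤ μhat a) (hμhat1 : ∑ a, μhat a = 1)
    -- the advantage function, with zero mean under μ
    (Af : (∀ i, A i) → ℝ)
    (hAf0 : ∑ a : (∀ i, A i), (∏ i, μ i (a i)) * Af a = 0)
    -- `ovr a c b` overrides the joint action `a` by the actions `c` of the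
    -- first h agents and the action `b` of the last agent
    (ovr : (∀ i, A i) → (∀ j : Fin h, A (ι (Fin.castSucc j))) →
      A (ι (Fin.last h)) → ∀ i, A i)
    (hovr1 : ∀ a c b (j : Fin h), ovr a c b (ι (Fin.castSucc j)) = c j)
    (hovr2 : ∀ a c b, ovr a c b (ι (Fin.last h)) = b)
    (hovr3 : ∀ a c b i, (∀ j : Fin (h + 1), ι j ≠ i) → ovr a c b i = a i) :
    -- importance-sampling identity
    ∑ a : (∀ i, A i), (∏ i, μ i (a i)) *
        ((μhat (a (ι (Fin.last h))) / μ (ι (Fin.last h)) (a (ι (Fin.last h))) - 1) *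
          (∏ j : Fin h,
            μ' j (a (ι (Fin.castSucc j))) / μ (ι (Fin.castSucc j)) (a (ι (Fin.castSucc j)))) *
          Af a)
      =
      ∑ c : (∀ j : Fin h, A (ι (Fin.castSucc j))), ∑ b : A (ι (Fin.last h)),
        (∏ j, μ' j (c j)) * μhat b *
          -- the multi-agent advantage A_{f,i_h}(c, b):
          ((∑ a : (∀ i, A i), (∏ i, μ i (a i)) * Af (ovr a c b))
            - ∑ a : (∀ i, A i), (∏ i, μ i (a i)) * Af (ovr a c (a (ι (Fin.last h))))) :=
  stmt_7_general ι hι μ hμpos hμ1 μ' μhat hμhat1 Af ovr hovr1 hovr2 hovr3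
end

section
/- Let S and A be finite sets, P : S × A → Δ(S), r : S × A → ℝ, β ≥ 0, and let μ, μ' be two policies S → Δ(A) such that every policy induces an ergodic Markov chain with stationary distribution π^μ, π^{μ'} respectively. Define η^μ = E_{s∼π^μ, a∼μ}[r(s,a)], the surrogate reward f^μ(s,a) = r(s,a) − β (r(s,a) − η^μ)², the mean-variance performance J^μ = E_{s∼π^μ, a∼μ}[f^μ(s,a)], and the advantage A_f^μ(s,a) = f^μ(s,a) − J^μ + ∑_{s'} P(s'|s,a) V_f^μ(s') − V_f^μ(s), where V_f^μ solves the Poisson equation for reward f^μ. Then J^{μ'} − J^μ = E_{s∼π^{μ'}, a∼μ'}[A_f^μ(s,a)] + β (η^{μ'} − η^μ)². -/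
theorem stmt_12 {S A : Type} [Fintype S] [Fintype A]
    (P : S → A → S → ℝ) (r : S → A → ℝ) (β : ℝ) (hβ : 0 ≤ β)
    (hPnn : ∀ s a s', 0 ≤ P s a s') (hP1 : ∀ s a, ∑ s', P s a s' = 1)
    (μ μ' : S → A → ℝ)
    (hμnn : ∀ s a, 0 ≤ μ s a) (hμ1 : ∀ s, ∑ a, μ s a = 1)
    (hμ'nn : ∀ s a, 0 ≤ μ' s a) (hμ'1 : ∀ s, ∑ a, μ' s a = 1)
    -- stationary distribution of the chain induced by μ
    (πμ : S → ℝ) (hπμpos : ∀ s, 0 < πμ s) (hπμ1 : ∑ s, πμ s = 1)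
    (hπμstat : ∀ s', ∑ s, πμ s * ∑ a, μ s a * P s a s' = πμ s')
    -- stationary distribution of the chain induced by μ'
    (πμ' : S → ℝ) (hπμ'pos : ∀ s, 0 < πμ' s) (hπμ'1 : ∑ s, πμ' s = 1)
    (hπμ'stat : ∀ s', ∑ s, πμ' s * ∑ a, μ' s a * P s a s' = πμ' s')
    -- average rewards
    (ημ ημ' : ℝ)
    (hημ : ημ = ∑ s, πμ s * ∑ a, μ s a * r s a)
    (hημ' : ημ' = ∑ s, πμ' s * ∑ a, μ' s a * r s a)
    -- surrogate rewards
    (fμ fμ' : S → A → ℝ)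
    (hfμ : ∀ s a, fμ s a = r s a - β * (r s a - ημ) ^ 2)
    (hfμ' : ∀ s a, fμ' s a = r s a - β * (r s a - ημ') ^ 2)
    -- mean-variance performances
    (Jμ Jμ' : ℝ)
    (hJμ : Jμ = ∑ s, πμ s * ∑ a, μ s a * fμ s a)
    (hJμ' : Jμ' = ∑ s, πμ' s * ∑ a, μ' s a * fμ' s a)
    -- value function of μ, solving the Poisson equation for reward fμ
    (Vf : S → ℝ)
    (hV : ∀ s, Vf s = (∑ a, μ s a * fμ s a) - Jμ
        + ∑ s', (∑ a, μ s a * P s a s') * Vf s')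
    -- advantage function of μ
    (Af : S → A → ℝ)
    (hAf : ∀ s a, Af s a = fμ s a - Jμ + (∑ s', P s a s' * Vf s') - Vf s) :
    Jμ' - Jμ = (∑ s, πμ' s * ∑ a, μ' s a * Af s a) + β * (ημ' - ημ) ^ 2 := by
  classical
  -- inner expansion of the advantage
  have hsum1 : ∀ s, ∑ a, μ' s a * Af s a
      = (∑ a, μ' s a * fμ s a) + (∑ a, μ' s a * ∑ s', P s a s' * Vf s')
        - (Jμ + Vf s) := by
    intro s
    have h1 := hμ'1 s
    calc ∑ a, μ' s a * Af s a
        = ∑ a, (μ' s a * fμ s a + μ' s a * (∑ s', P s a s' * Vf s')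
            - μ' s a * (Jμ + Vf s)) := by
          apply Finset.sum_congr rfl; intro a _; rw [hAf]; ring
      _ = (∑ a, μ' s a * fμ s a) + (∑ a, μ' s a * ∑ s', P s a s' * Vf s')
            - (∑ a, μ' s a) * (Jμ + Vf s) := by
          rw [Finset.sum_sub_distrib, Finset.sum_add_distrib, ← Finset.sum_mul]
      _ = _ := by rw [h1, one_mul]
  -- stationarity cancels the value terms
  have hX : ∑ s, πμ' s * ∑ a, μ' s a * (∑ s', P s a s' * Vf s')
      = ∑ s', πμ' s' * Vf s' := by
    have stepA : ∀ s, πμ' s * ∑ a, μ' s a * (∑ s', P s a s' * Vf s')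
        = ∑ s', (πμ' s * ∑ a, μ' s a * P s a s') * Vf s' := by
      intro s
      calc πμ' s * ∑ a, μ' s a * (∑ s', P s a s' * Vf s')
          = ∑ a, ∑ s', πμ' s * (μ' s a * (P s a s' * Vf s')) := by
            simp only [Finset.mul_sum]
        _ = ∑ s', ∑ a, πμ' s * (μ' s a * (P s a s' * Vf s')) := Finset.sum_comm
        _ = ∑ s', (πμ' s * ∑ a, μ' s a * P s a s') * Vf s' := by
            apply Finset.sum_congr rfl; intro s' _
            rw [Finset.mul_sum, Finset.sum_mul]
            apply Finset.sum_congr rfl; intro a _; ring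
    calc ∑ s, πμ' s * ∑ a, μ' s a * (∑ s', P s a s' * Vf s')
        = ∑ s, ∑ s', (πμ' s * ∑ a, μ' s a * P s a s') * Vf s' :=
          Finset.sum_congr rfl fun s _ => stepA s
      _ = ∑ s', ∑ s, (πμ' s * ∑ a, μ' s a * P s a s') * Vf s' := Finset.sum_comm
      _ = ∑ s', πμ' s' * Vf s' := by
          apply Finset.sum_congr rfl; intro s' _
          rw [← Finset.sum_mul, hπμ'stat]
  -- the advantage expectation
  have hAdv : ∑ s, πμ' s * ∑ a, μ' s a * Af s a
      = (∑ s, πμ' s * ∑ a, μ' s a * fμ s a) - Jμ := by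
    calc ∑ s, πμ' s * ∑ a, μ' s a * Af s a
        = ∑ s, (πμ' s * (∑ a, μ' s a * fμ s a)
            + πμ' s * (∑ a, μ' s a * ∑ s', P s a s' * Vf s')
            - (πμ' s * Jμ + πμ' s * Vf s)) := by
          apply Finset.sum_congr rfl; intro s _; rw [hsum1 s]; ring
      _ = (∑ s, πμ' s * ∑ a, μ' s a * fμ s a)
            + (∑ s, πμ' s * ∑ a, μ' s a * ∑ s', P s a s' * Vf s')
            - ((∑ s, πμ' s) * Jμ + ∑ s, πμ' s * Vf s) := by
          rw [Finset.sum_sub_distrib, Finset.sum_add_distrib,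
            Finset.sum_add_distrib, ← Finset.sum_mul]
      _ = _ := by rw [hX, hπμ'1, one_mul]; ring
  -- difference of surrogate rewards
  have hdiff : ∀ s a, fμ' s a
      = fμ s a + (β * (2 * (ημ' - ημ))) * r s a + β * (ημ ^ 2 - ημ' ^ 2) := by
    intro s a; rw [hfμ, hfμ']; ring
  -- linearity step for Jμ'
  have hJ : Jμ' = (∑ s, πμ' s * ∑ a, μ' s a * fμ s a)
      + (β * (2 * (ημ' - ημ))) * ημ' + β * (ημ ^ 2 - ημ' ^ 2) := by
    rw [hJμ']
    calc ∑ s, πμ' s * ∑ a, μ' s a * fμ' s a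
        = ∑ s, (πμ' s * ∑ a, μ' s a * fμ s a
            + (β * (2 * (ημ' - ημ))) * (πμ' s * ∑ a, μ' s a * r s a)
            + β * (ημ ^ 2 - ημ' ^ 2) * πμ' s) := by
          apply Finset.sum_congr rfl; intro s _
          have : ∑ a, μ' s a * fμ' s a
              = (∑ a, μ' s a * fμ s a)
                + (β * (2 * (ημ' - ημ))) * (∑ a, μ' s a * r s a)
                + β * (ημ ^ 2 - ημ' ^ 2) * (∑ a, μ' s a) := by
            rw [Finset.mul_sum, Finset.mul_sum, ← Finset.sum_add_distrib,
              ← Finset.sum_add_distrib]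
            apply Finset.sum_congr rfl; intro a _; rw [hdiff]; ring
          rw [this, hμ'1 s, mul_one]; ring
      _ = (∑ s, πμ' s * ∑ a, μ' s a * fμ s a)
            + (β * (2 * (ημ' - ημ))) * (∑ s, πμ' s * ∑ a, μ' s a * r s a)
            + β * (ημ ^ 2 - ημ' ^ 2) * (∑ s, πμ' s) := by
          rw [Finset.sum_add_distrib, Finset.sum_add_distrib,
            ← Finset.mul_sum, ← Finset.mul_sum]
      _ = _ := by rw [← hημ', hπμ'1, mul_one]
  rw [hAdv, hJ]; ring
end

section
/- In the setting of the mean-variance performance difference formula, suppose additionally that the average reward η^μ is the same constant for all policies μ. Then for any two policies μ, μ', J^{μ'} − J^μ = E_{s∼π^{μ'}, a∼μ'}[A_f^μ(s,a)]. Consequently, if μ̃ satisfies E_{s∼π^{μ'}, a∼μ'}[A_f^{μ̃}(s,a)] ≤ 0 for all μ', then J^{μ'} ≤ J^{μ̃} for all μ', i.e., μ̃ is globally optimal for the mean-variance objective. -/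
/-- A stationary stochastic policy on finite state space `S` and action space `A`. -/
def IsPolicy {S A : Type} [Fintype A] (μ : S → A → ℝ) : Prop :=
  (∀ s a, 0 ≤ μ s a) ∧ (∀ s, ∑ a, μ s a = 1)

theorem stmt_13 {S A : Type} [Fintype S] [Fintype A]
    (P : S → A → S → ℝ) (r : S → A → ℝ) (β : ℝ) (hβ : 0 ≤ β)
    (hPnn : ∀ s a s', 0 ≤ P s a s') (hP1 : ∀ s a, ∑ s', P s a s' = 1)
    -- stationary distribution of each policy's (ergodic) induced chain
    (π : (S → A → ℝ) → S → ℝ)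
    (hπpos : ∀ μ, IsPolicy μ → ∀ s, 0 < π μ s)
    (hπ1 : ∀ μ, IsPolicy μ → ∑ s, π μ s = 1)
    (hπstat : ∀ μ, IsPolicy μ →
      ∀ s', ∑ s, π μ s * ∑ a, μ s a * P s a s' = π μ s')
    -- average reward of each policy
    (η : (S → A → ℝ) → ℝ)
    (hη : ∀ μ, η μ = ∑ s, π μ s * ∑ a, μ s a * r s a)
    -- the average reward is the same constant for all policies
    (hconst : ∀ μ μ', IsPolicy μ → IsPolicy μ' → η μ = η μ')
    -- surrogate reward, mean-variance performance
    (f : (S → A → ℝ) → S → A → ℝ)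
    (hf : ∀ μ s a, f μ s a = r s a - β * (r s a - η μ) ^ 2)
    (J : (S → A → ℝ) → ℝ)
    (hJ : ∀ μ, J μ = ∑ s, π μ s * ∑ a, μ s a * f μ s a)
    -- value functions solving each policy's Poisson equation
    (V : (S → A → ℝ) → S → ℝ)
    (hV : ∀ μ, IsPolicy μ → ∀ s,
      V μ s = (∑ a, μ s a * f μ s a) - J μ
        + ∑ s', (∑ a, μ s a * P s a s') * V μ s')
    -- advantage functions
    (Af : (S → A → ℝ) → S → A → ℝ)
    (hAf : ∀ μ s a, Af μ s a
        = f μ s a - J μ + (∑ s', P s a s' * V μ s') - V μ s) :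
    (∀ μ μ', IsPolicy μ → IsPolicy μ' →
        J μ' - J μ = ∑ s, π μ' s * ∑ a, μ' s a * Af μ s a) ∧
    (∀ μtilde, IsPolicy μtilde →
      (∀ μ', IsPolicy μ' →
          (∑ s, π μ' s * ∑ a, μ' s a * Af μtilde s a) ≤ 0) →
        ∀ μ', IsPolicy μ' → J μ' ≤ J μtilde) := by

  have key : ∀ μ μ', IsPolicy μ → IsPolicy μ' →
      J μ' - J μ = ∑ s, π μ' s * ∑ a, μ' s a * Af μ s a := by
    intro μ μ' hμ hμ'
    have hee : η μ = η μ' := hconst μ μ' hμ hμ'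
    have hff : ∀ s a, f μ s a = f μ' s a := by
      intro s a; rw [hf, hf, hee]
    have h1 : ∀ s, ∑ a, μ' s a * Af μ s a
        = (∑ a, μ' s a * f μ' s a) - J μ
          + (∑ a, μ' s a * ∑ s', P s a s' * V μ s') - V μ s := by
      intro s
      simp only [hAf, hff, mul_sub, mul_add, Finset.sum_sub_distrib,
        Finset.sum_add_distrib, ← Finset.sum_mul, hμ'.2 s, one_mul]
    have hC : ∑ s, π μ' s * ∑ a, μ' s a * ∑ s', P s a s' * V μ s'
        = ∑ s, π μ' s * V μ s := by
      have : ∀ s, π μ' s * ∑ a, μ' s a * ∑ s', P s a s' * V μ s'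
          = ∑ s', (π μ' s * ∑ a, μ' s a * P s a s') * V μ s' := by
        intro s
        rw [Finset.mul_sum]
        simp only [Finset.mul_sum]
        rw [Finset.sum_comm]
        congr 1; funext s'
        rw [Finset.sum_mul]
        exact Finset.sum_congr rfl fun a _ => by ring
      simp only [this]
      rw [Finset.sum_comm]
      congr 1; funext s'
      rw [← Finset.sum_mul, hπstat μ' hμ' s']
    calc J μ' - J μ
        = (∑ s, π μ' s * ∑ a, μ' s a * f μ' s a) - J μ * ∑ s, π μ' s
          + ((∑ s, π μ' s * ∑ a, μ' s a * ∑ s', P s a s' * V μ s')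
            - ∑ s, π μ' s * V μ s) := by
          rw [hπ1 μ' hμ', hC, hJ μ']; ring
      _ = ∑ s, π μ' s * ∑ a, μ' s a * Af μ s a := by
          simp only [h1, mul_sub, mul_add, Finset.sum_sub_distrib,
            Finset.sum_add_distrib, ← Finset.sum_mul]
          ring
  refine ⟨key, ?_⟩
  intro μt hμt hle μ' hμ'
  have := key μt μ' hμt hμ'
  have h2 := hle μ' hμ'
  linarith
end
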